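/- (Apolarity Lemma) Let f ∈ ℂ[x₀,...,xₙ] be homogeneous of degree d, and let l₁,...,lₛ be pairwise non-proportional nonzero linear forms with corresponding points L₁,...,Lₛ in the dual projective space, Γ = {L₁,...,Lₛ}. Then f = λ₁l₁^d + ... + λₛlₛ^d for some λᵢ ∈ ℂ if and only if the homogeneous ideal I_Γ ⊂ T of Γ is contained in f^⊥. -/

import Mathlib

open MvPolynomial

/-- The endomorphism `∂/∂ xᵢ` of `ℂ[x₀,…,xₙ]`. -/
noncomputable def pd {n : ℕ} (i : Fin n) : Module.End ℂ (MvPolynomial (Fin n) ℂ) :=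
  (pderiv i).toLinearMap

lemma pd_apply {n : ℕ} (i : Fin n) (p : MvPolynomial (Fin n) ℂ) : pd i p = pderiv i p := rfl

lemma pd_pow_monomial {N : ℕ} (i : Fin N) (k : ℕ) (γ : Fin N →₀ ℕ) (c : ℂ) :
    (pd i ^ k) (monomial γ c) =
      ((γ i).descFactorial k : ℂ) • monomial (γ - Finsupp.single i k) c := by
  induction k with
  | zero => simp
  | succ k ih =>
    rw [pow_succ', Module.End.mul_apply, ih, map_smul, pd_apply, pderiv_monomial]
    rw [Finsupp.tsub_apply, Finsupp.single_eq_same]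
    rw [show γ - Finsupp.single i k - Finsupp.single i 1 = γ - Finsupp.single i (k+1) by
      rw [tsub_tsub, ← Finsupp.single_add]]
    rw [Nat.descFactorial_succ,
      show c * ((γ i - k : ℕ) : ℂ) = ((γ i - k : ℕ) : ℂ) • c from mul_comm _ _,
      ← smul_monomial, smul_smul, Nat.cast_mul, mul_comm]

lemma pderiv_linpow {N : ℕ} (i : Fin N) (a : Fin N → ℂ) (d : ℕ) :
    pderiv i ((∑ j, C (a j) * X j) ^ d)
      = (d : MvPolynomial (Fin N) ℂ) * (∑ j, C (a j) * X j) ^ (d - 1) * C (a i) := by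
  rw [pderiv_pow]
  congr 1
  rw [map_sum]
  simp [pderiv_C_mul, pderiv_X, Pi.single_apply, Finset.sum_ite_eq', mul_ite]

lemma pd_pow_linpow {N : ℕ} (i : Fin N) (k : ℕ) (a : Fin N → ℂ) (d : ℕ) :
    (pd i ^ k) ((∑ j, C (a j) * X j) ^ d) =
      (d.descFactorial k : ℂ) • (a i ^ k) • (∑ j, C (a j) * X j) ^ (d - k) := by
  induction k with
  | zero => simp
  | succ k ih =>
    rw [pow_succ', Module.End.mul_apply, ih, map_smul, map_smul, pd_apply, pderiv_linpow,
      Nat.descFactorial_succ, Nat.sub_sub,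
      show ((d - k : ℕ) : MvPolynomial (Fin N) ℂ) = C ((d - k : ℕ) : ℂ) from (map_natCast C _).symm]
    simp only [smul_eq_C_mul, map_mul, map_natCast, map_pow, Nat.cast_mul, pow_succ]
    ring

lemma prodList_linpow {N : ℕ} (a : Fin N → ℂ) (d : ℕ) (k : Fin N → ℕ) :
    ∀ L : List (Fin N),
      ((L.map fun i => pd i ^ k i).prod) ((∑ j, C (a j) * X j) ^ d) =
        (d.descFactorial (L.map k).sum : ℂ) • ((L.map fun i => a i ^ k i).prod) •
          (∑ j, C (a j) * X j) ^ (d - (L.map k).sum) := by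
  intro L
  induction L with
  | nil => simp
  | cons i L ih =>
    rw [List.map_cons, List.prod_cons, Module.End.mul_apply, ih, map_smul, map_smul,
      pd_pow_linpow]
    simp only [List.map_cons, List.prod_cons, List.sum_cons]
    rw [show d - (L.map k).sum - k i = d - (k i + (L.map k).sum) by omega]
    rw [show d.descFactorial (k i + (L.map k).sum)
        = (d - (L.map k).sum).descFactorial (k i) * d.descFactorial ((L.map k).sum) by
      have := Nat.descFactorial_mul_descFactorial
        (k := (L.map k).sum) (m := (L.map k).sum + k i) (n := d) (Nat.le_add_right _ _)
      simp only [Nat.add_sub_cancel_left] at this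
      rw [Nat.add_comm (k i), this]]
    rw [Nat.cast_mul]
    simp only [smul_smul]
    congr 1
    ring

lemma prodList_monomial {N : ℕ} (k : Fin N → ℕ) :
    ∀ L : List (Fin N), L.Nodup → ∀ (γ : Fin N →₀ ℕ) (c : ℂ),
      ((L.map fun i => pd i ^ k i).prod) (monomial γ c) =
        ((L.map fun i => ((γ i).descFactorial (k i) : ℂ)).prod) •
          monomial (γ - (L.map fun i => Finsupp.single i (k i)).sum) c := by
  intro L
  induction L with
  | nil => intro _ γ c; simp
  | cons i L ih =>
    intro hnd γ c
    obtain ⟨hiL, hLnd⟩ := List.nodup_cons.mp hnd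
    have hS : ((L.map fun j => Finsupp.single j (k j)).sum) i = 0 := by
      rw [← Finsupp.applyAddHom_apply, map_list_sum]
      apply List.sum_eq_zero
      intro x hx
      rw [List.map_map] at hx
      obtain ⟨j, hj, rfl⟩ := List.mem_map.mp hx
      have hji : j ≠ i := fun h => hiL (h ▸ hj)
      simp [Finsupp.single_apply, hji]
    rw [List.map_cons, List.prod_cons, Module.End.mul_apply, ih hLnd, map_smul,
      pd_pow_monomial]
    simp only [List.map_cons, List.prod_cons, List.sum_cons]
    rw [Finsupp.tsub_apply, hS, Nat.sub_zero, tsub_tsub, smul_smul,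
      add_comm ((L.map fun i => Finsupp.single i (k i)).sum) (Finsupp.single i (k i)),
      mul_comm]

/-- The differential operator associated to a polynomial `D ∈ T = ℂ[∂₀,…,∂ₙ]`, acting on
`R = ℂ[x₀,…,xₙ]` by differentiation: the variable `∂ i` acts as `∂/∂ xᵢ`, a monomial
`∂^α` acts as `∂^α (x^β) = α! C(β,α) x^{β-α}`. -/
noncomputable def diffOp {n : ℕ} (D : MvPolynomial (Fin n) ℂ) :
    Module.End ℂ (MvPolynomial (Fin n) ℂ) :=
  ∑ m ∈ D.support, D.coeff m • (List.ofFn fun i : Fin n => pd i ^ m i).prod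

lemma degree_univ {N : ℕ} (m : Fin N →₀ ℕ) : m.degree = ∑ i, m i :=
  Finset.sum_subset (Finset.subset_univ _) (fun i _ h => Finsupp.notMem_support_iff.mp h)

lemma support_degree {N e : ℕ} {D : MvPolynomial (Fin N) ℂ} (hD : D.IsHomogeneous e)
    {m : Fin N →₀ ℕ} (hm : m ∈ D.support) : m.degree = e := by
  have := hD (mem_support_iff.mp hm)
  rw [Finsupp.degree_eq_weight_one]; exact this

lemma diffOp_linpow {N : ℕ} (D : MvPolynomial (Fin N) ℂ) {e : ℕ} (hD : D.IsHomogeneous e)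
    (a : Fin N → ℂ) (d : ℕ) :
    diffOp D ((∑ j, C (a j) * X j) ^ d) =
      (d.descFactorial e : ℂ) • eval a D • (∑ j, C (a j) * X j) ^ (d - e) := by
  unfold diffOp
  rw [LinearMap.sum_apply, eval_eq', Finset.sum_smul, Finset.smul_sum]
  apply Finset.sum_congr rfl
  intro m hm
  have hsum : (List.map (⇑m) (List.finRange N)).sum = e := by
    rw [← List.ofFn_eq_map, List.sum_ofFn, ← degree_univ, support_degree hD hm]
  rw [LinearMap.smul_apply, List.ofFn_eq_map, prodList_linpow, hsum,
    show ((List.finRange N).map fun i => a i ^ m i).prod = ∏ i, a i ^ m i by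
      rw [← List.ofFn_eq_map, List.prod_ofFn]]
  simp only [smul_smul]
  congr 1
  ring

lemma exists_lt_of_ne {N : ℕ} {γ m : Fin N →₀ ℕ} (hdeg : γ.degree = m.degree)
    (hne : γ ≠ m) : ∃ i, γ i < m i := by
  by_contra h
  push_neg at h
  apply hne
  ext i
  refine le_antisymm ?_ (h i)
  by_contra h2
  push_neg at h2
  have : ∑ j, m j < ∑ j, γ j :=
    Finset.sum_lt_sum (fun j _ => h j) ⟨i, Finset.mem_univ i, h2⟩
  rw [← degree_univ, ← degree_univ, hdeg] at this
  exact lt_irrefl _ this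

lemma prodPow_homog {N d : ℕ} (m : Fin N →₀ ℕ) (hm : m.degree = d)
    (g : MvPolynomial (Fin N) ℂ) (hg : g.IsHomogeneous d) :
    ((List.ofFn fun i => pd i ^ m i).prod) g = (∏ i, ((m i).factorial : ℂ)) • C (coeff m g) := by
  conv_lhs => rw [g.as_sum, map_sum]
  rw [Finset.sum_eq_single m]
  · rw [List.ofFn_eq_map, prodList_monomial _ _ (List.nodup_finRange N)]
    rw [show ((List.finRange N).map fun i => Finsupp.single i (m i)).sum = m by
      rw [← List.ofFn_eq_map, List.sum_ofFn, Finsupp.univ_sum_single]]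
    rw [tsub_self,
      show ((List.finRange N).map fun i => (((m i).descFactorial (m i) : ℕ) : ℂ)).prod
          = ∏ i, ((m i).factorial : ℂ) by
        rw [← List.ofFn_eq_map, List.prod_ofFn]
        simp [Nat.descFactorial_self]]
    rw [← C_apply]
  · intro γ hγ hne
    have hdeg : γ.degree = m.degree := by rw [support_degree hg hγ, hm]
    obtain ⟨i, hi⟩ := exists_lt_of_ne hdeg hne
    rw [List.ofFn_eq_map, prodList_monomial _ _ (List.nodup_finRange N)]
    rw [show ((List.finRange N).map fun i => (((γ i).descFactorial (m i) : ℕ) : ℂ)).prod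
        = ∏ i, (((γ i).descFactorial (m i) : ℕ) : ℂ) by
      rw [← List.ofFn_eq_map, List.prod_ofFn]]
    rw [Finset.prod_eq_zero (Finset.mem_univ i)
      (by rw [Nat.descFactorial_eq_zero_iff_lt.mpr hi, Nat.cast_zero]), zero_smul]
  · intro hm2
    rw [notMem_support_iff.mp hm2, map_zero, map_zero]

lemma diffOp_homog_pair {N d : ℕ} (D g : MvPolynomial (Fin N) ℂ)
    (hD : D.IsHomogeneous d) (hg : g.IsHomogeneous d) :
    diffOp D g =
      C (∑ β ∈ D.support, coeff β D * coeff β g * (∏ i, ((β i).factorial : ℂ))) := by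
  unfold diffOp
  rw [LinearMap.sum_apply, map_sum]
  apply Finset.sum_congr rfl
  intro m hm
  rw [LinearMap.smul_apply, prodPow_homog m (support_degree hD hm) g hg]
  rw [smul_smul, smul_eq_C_mul, ← C_mul]
  congr 1
  ring

/-- Apolarity Lemma: `f` of degree `d` is a linear combination of the `d`-th powers of
the pairwise non-proportional nonzero linear forms `lᵢ` (with coefficient vectors `aᵢ`)
iff every homogeneous `D ∈ T` vanishing at all the points `Lᵢ = [aᵢ]` of the dual space
annihilates `f`, i.e. `I_Γ ⊆ f^⊥`. -/
theorem apolarity_lemma (n s d : ℕ)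
    (f : MvPolynomial (Fin (n + 1)) ℂ) (hf : f.IsHomogeneous d)
    (a : Fin s → Fin (n + 1) → ℂ) (ha : ∀ i, a i ≠ 0)
    (hprop : ∀ i i' : Fin s, i ≠ i' → ∀ c : ℂ, a i ≠ c • a i')
    (l : Fin s → MvPolynomial (Fin (n + 1)) ℂ)
    (hl : ∀ i, l i = ∑ j, C (a i j) * X j) :
    (∃ lam : Fin s → ℂ, f = ∑ i, lam i • (l i) ^ d) ↔
    (∀ D : MvPolynomial (Fin (n + 1)) ℂ, (∃ e, D.IsHomogeneous e) →
      (∀ i, eval (a i) D = 0) → diffOp D f = 0) := by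
  constructor
  · rintro ⟨lam, rfl⟩ D ⟨e, hD⟩ hev
    rw [map_sum]
    apply Finset.sum_eq_zero
    intro i _
    rw [map_smul, hl i, diffOp_linpow D hD, hev i, zero_smul, smul_zero, smul_zero]
  · intro H
    by_contra hcon
    have hfW : f ∉ Submodule.span ℂ (Set.range fun i => (l i) ^ d) := by
      intro hmem
      obtain ⟨lam, hlam⟩ := (Submodule.mem_span_range_iff_exists_fun ℂ).mp hmem
      exact hcon ⟨lam, hlam.symm⟩
    obtain ⟨φ, hφf, hφW⟩ := Submodule.exists_dual_map_eq_bot_of_notMem hfW inferInstance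
    have hφl : ∀ i, φ ((l i) ^ d) = 0 := by
      intro i
      have hm : φ ((l i) ^ d) ∈ (Submodule.span ℂ (Set.range fun i => (l i) ^ d)).map φ :=
        Submodule.mem_map_of_mem (Submodule.subset_span ⟨i, rfl⟩)
      rwa [hφW, Submodule.mem_bot] at hm
    have hld : ∀ i, ((l i) ^ d).IsHomogeneous d := by
      intro i
      rw [hl i]
      have h1 : (∑ j, C (a i j) * X j : MvPolynomial (Fin (n+1)) ℂ).IsHomogeneous 1 := by
        apply IsHomogeneous.sum
        intro j _
        simpa using (isHomogeneous_C _ (a i j)).mul (isHomogeneous_X _ j)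
      simpa using h1.pow d
    set S : Finset (Fin (n+1) →₀ ℕ) :=
      f.support ∪ Finset.univ.biUnion (fun i => ((l i) ^ d).support) with hS
    have hSdeg : ∀ β ∈ S, β.degree = d := by
      intro β hβ
      rcases Finset.mem_union.mp hβ with h | h
      · exact support_degree hf h
      · obtain ⟨i, _, hi⟩ := Finset.mem_biUnion.mp h
        exact support_degree (hld i) hi
    set D : MvPolynomial (Fin (n+1)) ℂ :=
      ∑ β ∈ S, monomial β (φ (monomial β 1) / (∏ i, ((β i).factorial : ℂ))) with hD
    have hDhom : D.IsHomogeneous d := by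
      apply IsHomogeneous.sum
      intro β hβ
      exact isHomogeneous_monomial _ (hSdeg β hβ)
    have hcoeff : ∀ β, coeff β D =
        if β ∈ S then φ (monomial β 1) / (∏ i, ((β i).factorial : ℂ)) else 0 := by
      intro β
      rw [hD, coeff_sum]
      simp only [coeff_monomial]
      rw [Finset.sum_ite_eq' S β _]
    have hsupp : D.support ⊆ S := by
      intro β hβ
      by_contra h
      exact mem_support_iff.mp hβ (by rw [hcoeff β, if_neg h])
    have key : ∀ g : MvPolynomial (Fin (n+1)) ℂ, g.IsHomogeneous d → g.support ⊆ S →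
        diffOp D g = C (φ g) := by
      intro g hgh hgs
      rw [diffOp_homog_pair D g hDhom hgh]
      congr 1
      rw [Finset.sum_subset hsupp (fun β _ hβ => by
        rw [notMem_support_iff.mp hβ, zero_mul, zero_mul])]
      have hterm : ∀ β ∈ S, coeff β D * coeff β g * (∏ i, ((β i).factorial : ℂ))
          = φ (monomial β (coeff β g)) := by
        intro β hβ
        rw [hcoeff β, if_pos hβ]
        have hfac : (∏ i, ((β i).factorial : ℂ)) ≠ 0 := by
          apply Finset.prod_ne_zero_iff.mpr
          intro i _
          exact_mod_cast Nat.factorial_ne_zero _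
        rw [show (monomial β) (coeff β g) = coeff β g • (monomial β) (1:ℂ) by
          rw [smul_monomial, smul_eq_mul, mul_one]]
        rw [map_smul, smul_eq_mul]
        field_simp
      rw [Finset.sum_congr rfl hterm, ← map_sum]
      congr 1
      conv_rhs => rw [g.as_sum]
      exact (Finset.sum_subset hgs fun β _ hβ => by
        rw [notMem_support_iff.mp hβ, map_zero]).symm
    have heval : ∀ i, eval (a i) D = 0 := by
      intro i
      have hsub : ((l i) ^ d).support ⊆ S := fun β hβ =>
        Finset.mem_union_right _ (Finset.mem_biUnion.mpr ⟨i, Finset.mem_univ i, hβ⟩)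
      have h1 : diffOp D ((l i) ^ d) = C (φ ((l i) ^ d)) := key _ (hld i) hsub
      rw [hφl i, map_zero] at h1
      have h2 := diffOp_linpow D hDhom (a i) d
      rw [← hl i, h1, Nat.sub_self, pow_zero, Nat.descFactorial_self, smul_smul,
        smul_eq_C_mul, mul_one] at h2
      have h3 : ((d.factorial : ℂ) * eval (a i) D) = 0 := by
        have := h2.symm
        rwa [show (0 : MvPolynomial (Fin (n+1)) ℂ) = C 0 by rw [map_zero],
          C_inj] at this
      have hdf : (d.factorial : ℂ) ≠ 0 := by exact_mod_cast Nat.factorial_ne_zero d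
      exact (mul_eq_zero.mp h3).resolve_left hdf
    have h4 : diffOp D f = C (φ f) := key f hf Finset.subset_union_left
    rw [H D ⟨d, hDhom⟩ heval] at h4
    apply hφf
    rw [show (0 : MvPolynomial (Fin (n+1)) ℂ) = C 0 by rw [map_zero], C_inj] at h4
    exact h4.symm
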